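/- Let G be a random matrix in ℝ^{m×n} with finite second moments and mean ∇L, and let A ∈ ℝ^{m×m} and B ∈ ℝ^{n×n} be symmetric positive definite matrices such that Cov_row(G B) and Cov_col(A G) are invertible. Then the matrix whitening conditions Cov_row(A G B) = I_m and Cov_col(A G B) = I_n hold if and only if A = Cov_row(G B)^{−1/2} and B = Cov_col(A G)^{−1/2}. -/

import Mathlib

open MeasureTheory Matrix

/-- Entrywise mean of a random matrix. -/
noncomputable def matMean {Ω : Type*} [MeasurableSpace Ω] (μ : Measure Ω) {a b : ℕ}
    (X : Ω → Matrix (Fin a) (Fin b) ℝ) : Matrix (Fin a) (Fin b) ℝ :=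
  Matrix.of fun i j => ∫ ω, X ω i j ∂μ

/-- Row-wise covariance `Cov_row(X) = E[(X − E[X])(X − E[X])ᵀ]` of a random matrix. -/
noncomputable def covRow {Ω : Type*} [MeasurableSpace Ω] (μ : Measure Ω) {a b : ℕ}
    (X : Ω → Matrix (Fin a) (Fin b) ℝ) : Matrix (Fin a) (Fin a) ℝ :=
  Matrix.of fun i i' => ∫ ω, ((X ω - matMean μ X) * (X ω - matMean μ X)ᵀ) i i' ∂μ

/-- Column-wise covariance `Cov_col(X) = E[(X − E[X])ᵀ(X − E[X])]` of a random matrix. -/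
noncomputable def covCol {Ω : Type*} [MeasurableSpace Ω] (μ : Measure Ω) {a b : ℕ}
    (X : Ω → Matrix (Fin a) (Fin b) ℝ) : Matrix (Fin b) (Fin b) ℝ :=
  Matrix.of fun j j' => ∫ ω, ((X ω - matMean μ X)ᵀ * (X ω - matMean μ X)) j j' ∂μ

open scoped ComplexOrder in
/-- The positive semidefinite square root of a positive semidefinite matrix (the definition
`Matrix.PosSemidef.sqrt` of the older Mathlib, which has since been removed). -/
noncomputable def Matrix.PosSemidef.sqrt {n : Type*} [Fintype n] [DecidableEq n] {𝕜 : Type*}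
    [RCLike 𝕜] {A : Matrix n n 𝕜} (hA : A.PosSemidef) : Matrix n n 𝕜 :=
  hA.1.eigenvectorUnitary.1 * diagonal ((↑) ∘ (√·) ∘ hA.1.eigenvalues) *
  (star hA.1.eigenvectorUnitary : Matrix n n 𝕜)

namespace Matrix.PosSemidef

lemma sqrt_eq_cfc' {k : ℕ} {M : Matrix (Fin k) (Fin k) ℝ} (hM : M.PosSemidef) :
    hM.sqrt = cfc Real.sqrt M := by
  rw [hM.1.cfc_eq Real.sqrt, IsHermitian.cfc, Unitary.conjStarAlgAut_apply]; rfl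

lemma spec_nonneg' {k : ℕ} {M : Matrix (Fin k) (Fin k) ℝ} (hM : M.PosSemidef) :
    ∀ x ∈ spectrum ℝ M, 0 ≤ x := by
  intro x hx
  rw [hM.1.spectrum_real_eq_range_eigenvalues] at hx
  obtain ⟨i, rfl⟩ := hx
  exact hM.eigenvalues_nonneg i

lemma sqrt_mul_self {k : ℕ} {M : Matrix (Fin k) (Fin k) ℝ} (hM : M.PosSemidef) :
    hM.sqrt * hM.sqrt = M := by
  have hsa : IsSelfAdjoint M := hM.1.isSelfAdjoint
  rw [sqrt_eq_cfc', ← cfc_mul (f := Real.sqrt) (g := Real.sqrt) (a := M)]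
  conv_rhs => rw [← cfc_id (R := ℝ) (a := M) hsa]
  exact cfc_congr fun x hx => Real.mul_self_sqrt (spec_nonneg' hM x hx)

lemma eq_sqrt_of_sq_eq {k : ℕ} {B M : Matrix (Fin k) (Fin k) ℝ} (hB : B.PosSemidef)
    (hM : M.PosSemidef) (h : B ^ 2 = M) : B = hM.sqrt := by
  have hsa : IsSelfAdjoint B := hB.1.isSelfAdjoint
  subst h
  rw [sqrt_eq_cfc', ← cfc_comp_pow (f := Real.sqrt) (n := 2) (a := B) (ha := hsa)]
  conv_lhs => rw [← cfc_id (R := ℝ) (a := B) hsa]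
  exact cfc_congr fun x hx => (Real.sqrt_sq (spec_nonneg' hB x hx)).symm

end Matrix.PosSemidef

section Aux

variable {Ω : Type*} [MeasurableSpace Ω] {μ : Measure Ω} [IsProbabilityMeasure μ]

private lemma l2_integrable_mul {f g : Ω → ℝ} (hf : MemLp f 2 μ) (hg : MemLp g 2 μ) :
    Integrable (fun ω => f ω * g ω) μ := by
  have h := MemLp.smul (p := 2) (q := 2) (r := 1) hg hf (hpqr := ⟨?_⟩)
  · exact memLp_one_iff_integrable.mp (by simpa [smul_eq_mul, Pi.mul_def] using h)
  · simp [ENNReal.inv_two_add_inv_two]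

private lemma entries_mul_right {a b c : ℕ} {X : Ω → Matrix (Fin a) (Fin b) ℝ}
    (hX : ∀ i j, MemLp (fun ω => X ω i j) 2 μ) (B : Matrix (Fin b) (Fin c) ℝ) :
    ∀ i j, MemLp (fun ω => (X ω * B) i j) 2 μ := by
  intro i j
  simp only [Matrix.mul_apply]
  exact memLp_finset_sum _ fun k _ => by
    simpa [mul_comm] using (hX i k).const_mul (B k j)

private lemma entries_mul_left {a b c : ℕ} {X : Ω → Matrix (Fin b) (Fin c) ℝ}
    (hX : ∀ i j, MemLp (fun ω => X ω i j) 2 μ) (C : Matrix (Fin a) (Fin b) ℝ) :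
    ∀ i j, MemLp (fun ω => (C * X ω) i j) 2 μ := by
  intro i j
  simp only [Matrix.mul_apply]
  exact memLp_finset_sum _ fun k _ => (hX k j).const_mul (C i k)

private lemma matMean_mul_left {a b c : ℕ} {X : Ω → Matrix (Fin b) (Fin c) ℝ}
    (hX : ∀ i j, MemLp (fun ω => X ω i j) 2 μ) (C : Matrix (Fin a) (Fin b) ℝ) :
    matMean μ (fun ω => C * X ω) = C * matMean μ X := by
  ext i j
  simp only [matMean, Matrix.of_apply, Matrix.mul_apply]
  rw [integral_finset_sum _ fun k _ =>
    ((hX k j).integrable (by norm_num)).const_mul (C i k)]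
  exact Finset.sum_congr rfl fun k _ => integral_const_mul _ _

private lemma integrable_covRow_entry {a b : ℕ} {X : Ω → Matrix (Fin a) (Fin b) ℝ}
    (hX : ∀ i j, MemLp (fun ω => X ω i j) 2 μ) (M : Matrix (Fin a) (Fin b) ℝ) :
    ∀ k l, Integrable (fun ω => ((X ω - M) * (X ω - M)ᵀ) k l) μ := by
  intro k l
  simp only [Matrix.mul_apply, Matrix.transpose_apply, Matrix.sub_apply]
  exact integrable_finset_sum _ fun j _ =>
    l2_integrable_mul ((hX k j).sub (memLp_const _)) ((hX l j).sub (memLp_const _))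

private lemma covRow_mul_left {a b c : ℕ} {X : Ω → Matrix (Fin b) (Fin c) ℝ}
    (hX : ∀ i j, MemLp (fun ω => X ω i j) 2 μ) (C : Matrix (Fin a) (Fin b) ℝ) :
    covRow μ (fun ω => C * X ω) = C * covRow μ X * Cᵀ := by
  have hM : matMean μ (fun ω => C * X ω) = C * matMean μ X := matMean_mul_left hX C
  have hZ := integrable_covRow_entry hX (matMean μ X)
  have key : ∀ ω, (C * X ω - C * matMean μ X) * (C * X ω - C * matMean μ X)ᵀ
      = C * ((X ω - matMean μ X) * (X ω - matMean μ X)ᵀ) * Cᵀ := by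
    intro ω
    rw [← Matrix.mul_sub, Matrix.transpose_mul]
    simp only [Matrix.mul_assoc]
  ext i i'
  show (∫ ω, ((C * X ω - matMean μ (fun ω => C * X ω)) *
      (C * X ω - matMean μ (fun ω => C * X ω))ᵀ) i i' ∂μ) = (C * covRow μ X * Cᵀ) i i'
  rw [hM]
  have expand : ∀ ω, (C * ((X ω - matMean μ X) * (X ω - matMean μ X)ᵀ) * Cᵀ) i i'
      = ∑ l, ∑ k, C i k * ((X ω - matMean μ X) * (X ω - matMean μ X)ᵀ) k l * Cᵀ l i' := by
    intro ω
    simp [Matrix.mul_apply, Finset.sum_mul]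
  simp_rw [key, expand]
  rw [integral_finset_sum _ fun l _ => integrable_finset_sum _ fun k _ =>
    ((hZ k l).const_mul (C i k)).mul_const (Cᵀ l i')]
  rw [show (C * covRow μ X * Cᵀ) i i'
      = ∑ l, ∑ k, C i k * (covRow μ X) k l * Cᵀ l i' by
    simp [Matrix.mul_apply, Finset.sum_mul]]
  refine Finset.sum_congr rfl fun l _ => ?_
  rw [integral_finset_sum _ fun k _ => ((hZ k l).const_mul (C i k)).mul_const (Cᵀ l i')]
  refine Finset.sum_congr rfl fun k _ => ?_
  rw [integral_mul_const, integral_const_mul]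
  rfl

private lemma matMean_transpose {a b : ℕ} (X : Ω → Matrix (Fin a) (Fin b) ℝ) :
    matMean μ (fun ω => (X ω)ᵀ) = (matMean μ X)ᵀ := by
  ext i j; rfl

private lemma covCol_eq_covRow_transpose {a b : ℕ} (X : Ω → Matrix (Fin a) (Fin b) ℝ) :
    covCol μ X = covRow μ (fun ω => (X ω)ᵀ) := by
  have key : ∀ ω, ((X ω)ᵀ - (matMean μ X)ᵀ) * ((X ω)ᵀ - (matMean μ X)ᵀ)ᵀ
      = (X ω - matMean μ X)ᵀ * (X ω - matMean μ X) := by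
    intro ω
    rw [← Matrix.transpose_sub, Matrix.transpose_transpose]
  ext j j'
  simp only [covCol, covRow, Matrix.of_apply, matMean_transpose]
  simp_rw [key]

private lemma covCol_mul_right {a b c : ℕ} {X : Ω → Matrix (Fin a) (Fin b) ℝ}
    (hX : ∀ i j, MemLp (fun ω => X ω i j) 2 μ) (B : Matrix (Fin b) (Fin c) ℝ) :
    covCol μ (fun ω => X ω * B) = Bᵀ * covCol μ X * B := by
  have hXT : ∀ i j, MemLp (fun ω => (X ω)ᵀ i j) 2 μ := fun i j => hX j i
  rw [covCol_eq_covRow_transpose]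
  have : (fun ω => (X ω * B)ᵀ) = fun ω => Bᵀ * (X ω)ᵀ := by
    funext ω; rw [Matrix.transpose_mul]
  rw [this, covRow_mul_left hXT Bᵀ, Matrix.transpose_transpose,
    covCol_eq_covRow_transpose]

/-- The key algebraic equivalence. -/
private lemma whiten_iff {k : ℕ} {A R : Matrix (Fin k) (Fin k) ℝ} (hA : A.PosDef)
    (hR : R.PosSemidef) (hRdet : IsUnit R.det) : A * R * A = 1 ↔ A = hR.sqrt⁻¹ := by
  have hss : hR.sqrt * hR.sqrt = R := hR.sqrt_mul_self
  have hsdet : IsUnit hR.sqrt.det := by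
    have h2 : hR.sqrt.det * hR.sqrt.det = R.det := by rw [← Matrix.det_mul, hss]
    exact isUnit_of_mul_isUnit_left (h2 ▸ hRdet)
  have hAdet : IsUnit A.det := hA.det_pos.ne'.isUnit
  constructor
  · intro h
    have hAinv : (A⁻¹).PosDef := hA.inv
    have hRA : A⁻¹ * A⁻¹ = R := by
      have h2 : A⁻¹ * (A * R * A) * A⁻¹ = A⁻¹ * 1 * A⁻¹ := by rw [h]
      simp only [Matrix.mul_assoc] at h2
      rw [Matrix.mul_nonsing_inv _ hAdet, Matrix.mul_one, Matrix.one_mul,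
        ← Matrix.mul_assoc, Matrix.nonsing_inv_mul _ hAdet, Matrix.one_mul] at h2
      exact h2.symm
    have heq : A⁻¹ = hR.sqrt :=
      hAinv.posSemidef.eq_sqrt_of_sq_eq hR (by rw [pow_two, hRA])
    rw [← heq, Matrix.nonsing_inv_nonsing_inv _ hAdet]
  · intro h
    subst h
    calc hR.sqrt⁻¹ * R * hR.sqrt⁻¹ = hR.sqrt⁻¹ * (hR.sqrt * hR.sqrt) * hR.sqrt⁻¹ := by
          rw [hss]
      _ = 1 := by
          rw [← Matrix.mul_assoc, Matrix.nonsing_inv_mul _ hsdet,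
            Matrix.one_mul, Matrix.mul_nonsing_inv _ hsdet]

end Aux

/-- **Optimality condition for matrix whitening.**
Let `G` be a random `m × n` matrix with finite second moments and mean `∇L`, and let `A`, `B`
be symmetric positive definite with `Cov_row(G B)` and `Cov_col(A G)` invertible.  Then
`Cov_row(A G B) = I_m` and `Cov_col(A G B) = I_n` hold if and only if
`A = Cov_row(G B)^{−1/2}` and `B = Cov_col(A G)^{−1/2}`. -/
theorem statement6 {Ω : Type*} [MeasurableSpace Ω] (μ : Measure Ω) [IsProbabilityMeasure μ]
    {m n : ℕ} (G : Ω → Matrix (Fin m) (Fin n) ℝ)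
    (gradL : Matrix (Fin m) (Fin n) ℝ)
    (hg2 : ∀ i j, MemLp (fun ω => G ω i j) 2 μ)
    (hmean : ∀ i j, ∫ ω, G ω i j ∂μ = gradL i j)
    (A : Matrix (Fin m) (Fin m) ℝ) (B : Matrix (Fin n) (Fin n) ℝ)
    (hA : A.PosDef) (hB : B.PosDef)
    (hRB : (covRow μ (fun ω => G ω * B)).PosSemidef)
    (hRBinv : IsUnit (covRow μ (fun ω => G ω * B)).det)
    (hAG : (covCol μ (fun ω => A * G ω)).PosSemidef)
    (hAGinv : IsUnit (covCol μ (fun ω => A * G ω)).det) :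
    (covRow μ (fun ω => A * G ω * B) = 1 ∧ covCol μ (fun ω => A * G ω * B) = 1) ↔
      (A = hRB.sqrt⁻¹ ∧ B = hAG.sqrt⁻¹) := by
  have hAT : Aᵀ = A := by
    rw [← Matrix.conjTranspose_eq_transpose_of_trivial]; exact hA.1
  have hBT : Bᵀ = B := by
    rw [← Matrix.conjTranspose_eq_transpose_of_trivial]; exact hB.1
  have hGB : ∀ i j, MemLp (fun ω => (G ω * B) i j) 2 μ := entries_mul_right hg2 B
  have hAGm : ∀ i j, MemLp (fun ω => (A * G ω) i j) 2 μ := entries_mul_left hg2 A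
  have e1 : covRow μ (fun ω => A * G ω * B) = A * covRow μ (fun ω => G ω * B) * A := by
    have : (fun ω => A * G ω * B) = fun ω => A * (G ω * B) := by
      funext ω; rw [Matrix.mul_assoc]
    rw [this, covRow_mul_left hGB A, hAT]
  have e2 : covCol μ (fun ω => A * G ω * B) = B * covCol μ (fun ω => A * G ω) * B := by
    rw [show (fun ω => A * G ω * B) = fun ω => (A * G ω) * B from rfl,
      covCol_mul_right hAGm B, hBT]
  rw [e1, e2]
  exact and_congr (whiten_iff hA hRB hRBinv) (whiten_iff hB hAG hAGinv)
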